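/- arXiv:1905.07621 — 2 statements merged into one kernel-verified Lean document; each statement's English description precedes it below -/
import Mathlib

section
/- Martin's identity: for all positive natural numbers x1, x2, x3, x4, (x1^x3 + x1^x3)^x4 * (x2^x4 + x2^x4)^x3 = (x1^x4 + x1^x4)^x3 * (x2^x3 + x2^x3)^x4. -/
theorem martin_identity (x1 x2 x3 x4 : ℕ+) :
    (x1 ^ (x3 : ℕ) + x1 ^ (x3 : ℕ)) ^ (x4 : ℕ) * (x2 ^ (x4 : ℕ) + x2 ^ (x4 : ℕ)) ^ (x3 : ℕ) =
    (x1 ^ (x4 : ℕ) + x1 ^ (x4 : ℕ)) ^ (x3 : ℕ) * (x2 ^ (x3 : ℕ) + x2 ^ (x3 : ℕ)) ^ (x4 : ℕ) := by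
  apply PNat.coe_injective
  push_cast
  ring
end

section
/- Every propositional formula built only from atoms, ∧, and ⇒ (no ∨) evaluates in ℕ+ the same as its exp-log normal form, obtained by repeatedly applying the rewrites γ^(α*β) → (γ^β)^α and (β*γ)^α → β^α * γ^α; moreover this rewriting terminates. -/
/-- Formulas in the {∧, ⇒} fragment. -/
inductive Formula2 : Type
  | atom : ℕ → Formula2
  | and  : Formula2 → Formula2 → Formula2
  | imp  : Formula2 → Formula2 → Formula2

/-- Evaluation in ℕ (positive atoms): ∧ is ×, ψ ⇒ φ is φ^ψ. -/
def Formula2.eval (v : ℕ → ℕ+) : Formula2 → ℕ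
  | .atom i  => (v i : ℕ)
  | .and φ ψ => φ.eval v * ψ.eval v
  | .imp ψ φ => φ.eval v ^ ψ.eval v

/-- One step of the exp-log rewriting:
`γ^(α∧β) → (γ^β)^α` (currying) and `(β∧γ)^α → β^α ∧ γ^α`, applied anywhere. -/
inductive Step : Formula2 → Formula2 → Prop
  | curry (α β γ : Formula2) :
      Step (.imp (.and α β) γ) (.imp α (.imp β γ))
  | distrib (α β γ : Formula2) :
      Step (.imp α (.and β γ)) (.and (.imp α β) (.imp α γ))
  | andLeft {φ φ'} (ψ : Formula2) : Step φ φ' → Step (.and φ ψ) (.and φ' ψ)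
  | andRight (φ : Formula2) {ψ ψ'} : Step ψ ψ' → Step (.and φ ψ) (.and φ ψ')
  | impLeft {φ φ'} (ψ : Formula2) : Step φ φ' → Step (.imp φ ψ) (.imp φ' ψ)
  | impRight (φ : Formula2) {ψ ψ'} : Step ψ ψ' → Step (.imp φ ψ) (.imp φ ψ')


def Formula2.m : Formula2 → ℕ
  | .atom _ => 1
  | .and a b => a.m + b.m + 1
  | .imp a b => b.m * 2 ^ a.m

lemma Formula2.m_pos (φ : Formula2) : 1 ≤ φ.m := by
  induction φ with
  | atom _ => simp [Formula2.m]
  | and a b ha hb => simp [Formula2.m]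
  | imp a b ha hb =>
    simp only [Formula2.m]
    have : 1 ≤ 2 ^ a.m := Nat.one_le_two_pow
    calc 1 = 1 * 1 := by ring
    _ ≤ b.m * 2 ^ a.m := Nat.mul_le_mul hb this

lemma step_m {φ ψ : Formula2} (h : Step φ ψ) : ψ.m < φ.m := by
  induction h with
  | curry α β γ =>
    simp only [Formula2.m]
    have hγ := γ.m_pos
    have : γ.m * 2 ^ β.m * 2 ^ α.m = γ.m * 2 ^ (α.m + β.m) := by
      rw [pow_add]; ring
    rw [this]
    have h2 : 2 ^ (α.m + β.m) < 2 ^ (α.m + β.m + 1) :=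
      Nat.pow_lt_pow_right (by norm_num) (by omega)
    exact mul_lt_mul_of_pos_left h2 (by omega)
  | distrib α β γ =>
    simp only [Formula2.m]
    have hα : 2 ≤ 2 ^ α.m := by
      calc 2 = 2 ^ 1 := rfl
      _ ≤ 2 ^ α.m := Nat.pow_le_pow_right (by norm_num) α.m_pos
    have : (β.m + γ.m + 1) * 2 ^ α.m = β.m * 2 ^ α.m + γ.m * 2 ^ α.m + 2 ^ α.m := by ring
    omega
  | andLeft ψ _ ih => simp only [Formula2.m]; omega
  | andRight φ _ ih => simp only [Formula2.m]; omega
  | impLeft ψ _ ih =>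
    simp only [Formula2.m]
    have := ψ.m_pos
    exact mul_lt_mul_of_pos_left (Nat.pow_lt_pow_right (by norm_num) ih) (by omega)
  | impRight φ _ ih =>
    simp only [Formula2.m]
    exact mul_lt_mul_of_pos_right ih (by positivity)

theorem explog_sound_and_terminating :
    (∀ φ ψ : Formula2, Step φ ψ → ∀ v : ℕ → ℕ+, φ.eval v = ψ.eval v) ∧
    WellFounded (fun ψ φ : Formula2 => Step φ ψ) := by
  constructor
  · intro φ ψ h
    induction h with
    | curry α β γ => intro v; simp [Formula2.eval, pow_mul']
    | distrib α β γ => intro v; simp [Formula2.eval, mul_pow]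
    | andLeft ψ _ ih => intro v; simp [Formula2.eval, ih v]
    | andRight φ _ ih => intro v; simp [Formula2.eval, ih v]
    | impLeft ψ _ ih => intro v; simp [Formula2.eval, ih v]
    | impRight φ _ ih => intro v; simp [Formula2.eval, ih v]
  · exact Subrelation.wf (fun h => step_m h) (InvImage.wf Formula2.m Nat.lt_wfRel.wf)
end
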